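/- arXiv:math/0507417 — 3 statements merged into one kernel-verified Lean document; each statement's English description precedes it below -/
import Mathlib

section
/- Let k = 2, α ∈ (0,1) and ε = (ε_1, ε_2) with ε_i > 0. Let a_i satisfy P_{(0,0)}{x : x_1 > a_1 or x_2 > a_2} = α and P_{ε_1}{X_1 > a_1} = P_{ε_2}{X_2 > a_2}; let b_i satisfy P_0{X_i ≥ b_i} = α; and let ã_i satisfy P_{(0,0)}({x : x_1 > ã_1} ∪ {x : x_2 > ã_2} ∪ {x : x_1 > b_1, x_2 > b_2}) = α and P_{ε_1}{X_1 ≥ ã_1} = P_{ε_2}{X_2 ≥ ã_2}. Then b_i < a_i < ã_i for i = 1, 2. -/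
/-
Since each `P θ` has a positive density, it charges every nonempty open set and no coordinate
hyperplane. Hence the tail probabilities `c ↦ P θ {x | c < x i}` are strictly decreasing,
`≤` and `<` in a coordinate give the same probability, and adding a nonempty open set to a
rejection region strictly increases its probability. At `θ = 0` this gives `b i < a i`, since
the stepdown region is the tail `{a i < x i}` plus a nonempty open set, and it rules out
`ta ≤ a`, since the stepup region would then contain the stepdown region plus the open box
`b < x < a` although both have probability `α`. At `θ = ε` the two balancing equations turn
strict monotonicity of both tails into `a 0 < ta 0 ↔ a 1 < ta 1`.
-/

open MeasureTheory Filter Set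
open scoped ENNReal

noncomputable section

/-- A decision rule `D` assigns to each data point the set of rejected hypotheses.
It is *monotone* if raising the coordinates of rejected hypotheses while strictly
lowering those of accepted ones does not change the decision. -/
def MonotoneRule {k : ℕ} (D : (Fin k → ℝ) → Finset (Fin k)) : Prop :=
  ∀ x y : Fin k → ℝ, (∀ i ∈ D x, x i ≤ y i) → (∀ i ∉ D x, y i < x i) → D y = D x

/-- Measurability of a decision rule. -/
def MeasurableRule {k : ℕ} (D : (Fin k → ℝ) → Finset (Fin k)) : Prop :=
  ∀ S : Finset (Fin k), MeasurableSet {x | D x = S}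

/-- Strong control of the familywise error rate at level `α`. -/
def ControlsFWER {k : ℕ} (P : (Fin k → ℝ) → Measure (Fin k → ℝ))
    (D : (Fin k → ℝ) → Finset (Fin k)) (α : ℝ) : Prop :=
  ∀ θ : Fin k → ℝ, P θ {x | ∃ i ∈ D x, θ i ≤ 0} ≤ ENNReal.ofReal α

/-- The distributional assumptions of the paper: each `P θ` is a probability measure with a
strictly positive density; (M) monotonicity in the parameter for signed upper sets; (C) the law
of any subcollection of coordinates depends only on the corresponding parameters; (L) each
coordinate tends to `±∞` in probability as its parameter does. -/
def Setup {k : ℕ} (P : (Fin k → ℝ) → Measure (Fin k → ℝ)) : Prop :=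
  (∀ θ, IsProbabilityMeasure (P θ)) ∧
  (∀ θ, ∃ f : (Fin k → ℝ) → ℝ≥0∞, Measurable f ∧ (∀ x, 0 < f x ∧ f x ≠ ⊤) ∧
    P θ = MeasureTheory.volume.withDensity f) ∧
  (∀ δ : Fin k → ℝ, (∀ i, δ i = 1 ∨ δ i = -1) →
    ∀ θ γ : Fin k → ℝ, (∀ i, δ i * θ i ≤ δ i * γ i) →
    ∀ M : Set (Fin k → ℝ), MeasurableSet M → IsUpperSet M →
    P θ {x | (fun i => δ i * x i) ∈ M} ≤ P γ {x | (fun i => δ i * x i) ∈ M}) ∧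
  (∀ (I : Set (Fin k)) (θ γ : Fin k → ℝ), (∀ i ∈ I, θ i = γ i) →
    Measure.map I.restrict (P θ) = Measure.map I.restrict (P γ)) ∧
  (∀ (θ : Fin k → ℝ) (i : Fin k) (c : ℝ),
    Tendsto (fun t => P (Function.update θ i t) {x | x i ≤ c}) atTop (nhds 0) ∧
    Tendsto (fun t => P (Function.update θ i t) {x | c ≤ x i}) atBot (nhds 0))

section MeasureLemmas

variable {α : Type*} [TopologicalSpace α] [MeasurableSpace α] {μ : Measure α}

theorem measure_lt_measure_of_isOpen_subset_sdiff [IsFiniteMeasure μ] [μ.IsOpenPosMeasure]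
    {A C U : Set α} (hA : NullMeasurableSet A μ) (hAC : A ⊆ C) (hU : IsOpen U)
    (hUne : U.Nonempty) (hUC : U ⊆ C \ A) : μ A < μ C :=
  calc μ A < μ A + μ (C \ A) :=
        ENNReal.lt_add_right (measure_ne_top μ A)
          ((hU.measure_pos μ hUne).trans_le (measure_mono hUC)).ne'
    _ = μ C := by rw [measure_add_sdiff hA, union_eq_self_of_subset_left hAC]

end MeasureLemmas

section Coordinates

variable {ι : Type*} {μ : Measure (ι → ℝ)}

theorem measure_le_apply_eq_measure_lt_apply [Fintype ι] (hμ : μ ≪ volume) (i : ι) (c : ℝ) :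
    μ {x | c ≤ x i} = μ {x | c < x i} := by
  have hyperplane : volume {x : ι → ℝ | x i = c} = 0 := by
    rw [volume_pi]; exact Measure.pi_hyperplane (α := fun _ => ℝ) _ i c
  rw [← measure_sdiff_null (hμ hyperplane)]
  congr 1
  ext x
  simp only [Set.mem_sdiff, mem_ofPred_eq, lt_iff_le_and_ne, ne_comm (a := c), Ne]

theorem strictAnti_measure_lt_apply [IsFiniteMeasure μ] [μ.IsOpenPosMeasure] (i : ι) :
    StrictAnti fun c => μ {x : ι → ℝ | c < x i} := by
  intro c d hcd
  refine measure_lt_measure_of_isOpen_subset_sdiff (U := {x | c < x i ∧ x i < d})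
    (measurableSet_lt measurable_const (measurable_pi_apply i)).nullMeasurableSet
    (fun x hx => hcd.trans hx)
    ((isOpen_lt continuous_const (continuous_apply i)).inter
      (isOpen_lt (continuous_apply i) continuous_const))
    ⟨fun _ => (c + d) / 2, by simp only [mem_ofPred_eq]; constructor <;> linarith⟩
    (fun x hx => ⟨hx.1, not_lt.2 hx.2.le⟩)

theorem measure_lt_apply_lt_measure_exists_lt_apply [IsFiniteMeasure μ] [μ.IsOpenPosMeasure]
    (a : ι → ℝ) {i i' : ι} (hi' : i' ≠ i) :
    μ {x | a i < x i} < μ {x | ∃ j, a j < x j} := by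
  classical
  refine measure_lt_measure_of_isOpen_subset_sdiff (U := {x | x i < a i ∧ a i' < x i'})
    (measurableSet_lt measurable_const (measurable_pi_apply i)).nullMeasurableSet
    (fun x hx => ⟨i, hx⟩)
    ((isOpen_lt (continuous_apply i) continuous_const).inter
      (isOpen_lt continuous_const (continuous_apply i')))
    ⟨Function.update (fun k => a k + 1) i (a i - 1), ?_⟩
    (fun x hx => ⟨⟨i', hx.2⟩, not_lt.2 hx.1.le⟩)
  simp only [mem_ofPred_eq, Function.update_self, Function.update_of_ne hi']
  constructor <;> linarith

theorem measure_exists_lt_apply_lt_measure_union [Finite ι] [IsFiniteMeasure μ]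
    [μ.IsOpenPosMeasure] {a b c : ι → ℝ} (hca : ∀ j, c j ≤ a j) (hba : ∀ j, b j < a j) :
    μ {x | ∃ j, a j < x j} < μ ({x | ∃ j, c j < x j} ∪ {x | ∀ j, b j < x j}) := by
  have := Fintype.ofFinite ι
  refine measure_lt_measure_of_isOpen_subset_sdiff (U := univ.pi fun j => Ioo (b j) (a j))
    (by measurability)
    (fun x ⟨j, hj⟩ => Or.inl ⟨j, (hca j).trans_lt hj⟩)
    (isOpen_set_pi finite_univ fun j _ => isOpen_Ioo)
    (univ_pi_nonempty_iff.2 fun j => nonempty_Ioo.2 (hba j))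
    (fun x hx => ⟨Or.inr fun j => (hx j trivial).1, ?_⟩)
  rintro ⟨j, hj⟩
  exact (hx j trivial).2.not_gt hj

end Coordinates

namespace Setup

variable {k : ℕ} {P : (Fin k → ℝ) → Measure (Fin k → ℝ)}

theorem isProbabilityMeasure (hP : Setup P) (θ : Fin k → ℝ) : IsProbabilityMeasure (P θ) :=
  hP.1 θ

theorem absolutelyContinuous_volume (hP : Setup P) (θ : Fin k → ℝ) : P θ ≪ volume := by
  obtain ⟨f, -, -, hf⟩ := hP.2.1 θ
  rw [hf]
  exact withDensity_absolutelyContinuous _ _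

theorem isOpenPosMeasure (hP : Setup P) (θ : Fin k → ℝ) : (P θ).IsOpenPosMeasure := by
  obtain ⟨f, hf_meas, hf_pos, hf⟩ := hP.2.1 θ
  rw [hf]
  exact (withDensity_absolutelyContinuous' hf_meas.aemeasurable
    (ae_of_all _ fun x => (hf_pos x).1.ne')).isOpenPosMeasure

end Setup

theorem stmt_6_general
    (P : (Fin 2 → ℝ) → Measure (Fin 2 → ℝ)) (hP : Setup P)
    (α : ℝ) (ε₁ ε₂ : ℝ)
    (a b ta : Fin 2 → ℝ)
    (ha : P ![0, 0] {x | a 0 < x 0 ∨ a 1 < x 1} = ENNReal.ofReal α)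
    (ha' : P ![ε₁, ε₂] {x | a 0 < x 0} = P ![ε₁, ε₂] {x | a 1 < x 1})
    (hb : ∀ i : Fin 2, P ![0, 0] {x | b i ≤ x i} = ENNReal.ofReal α)
    (hta : P ![0, 0] ({x : Fin 2 → ℝ | ta 0 < x 0} ∪ {x | ta 1 < x 1} ∪
        {x | b 0 < x 0 ∧ b 1 < x 1}) = ENNReal.ofReal α)
    (hta' : P ![ε₁, ε₂] {x | ta 0 ≤ x 0} = P ![ε₁, ε₂] {x | ta 1 ≤ x 1}) :
    ∀ i : Fin 2, b i < a i ∧ a i < ta i := by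
  have := hP.isProbabilityMeasure
  have := hP.isOpenPosMeasure
  have h_or_a : {x : Fin 2 → ℝ | a 0 < x 0 ∨ a 1 < x 1} = {x | ∃ j, a j < x j} := by
    simp only [Fin.exists_fin_two]
  have hb_lt_a (i : Fin 2) : b i < a i := by
    refine (StrictAnti.lt_iff_gt (strictAnti_measure_lt_apply (μ := P ![0, 0]) i)).1 ?_
    calc P ![0, 0] {x | a i < x i} < P ![0, 0] {x | ∃ j, a j < x j} :=
          measure_lt_apply_lt_measure_exists_lt_apply a (i' := i + 1) (by fin_cases i <;> decide)
      _ = P ![0, 0] {x | b i ≤ x i} := by rw [← h_or_a, ha, hb]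
      _ = P ![0, 0] {x | b i < x i} :=
          measure_le_apply_eq_measure_lt_apply (hP.absolutelyContinuous_volume _) i (b i)
  have h_or_ta : a 0 < ta 0 ∨ a 1 < ta 1 := by
    by_contra! hta_le_a
    have h_union : {x : Fin 2 → ℝ | ta 0 < x 0} ∪ {x | ta 1 < x 1} ∪
        {x | b 0 < x 0 ∧ b 1 < x 1} = {x | ∃ j, ta j < x j} ∪ {x | ∀ j, b j < x j} := by
      simp only [Fin.exists_fin_two, Fin.forall_fin_two, ofPred_or]
    have := measure_exists_lt_apply_lt_measure_union (μ := P ![0, 0])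
      (Fin.forall_fin_two.2 hta_le_a) hb_lt_a
    rw [← h_or_a, ← h_union, ha, hta] at this
    exact this.false
  have h_iff : a 0 < ta 0 ↔ a 1 < ta 1 := by
    have hε := hP.absolutelyContinuous_volume ![ε₁, ε₂]
    rw [← StrictAnti.lt_iff_gt (strictAnti_measure_lt_apply (μ := P ![ε₁, ε₂]) 0),
      ← StrictAnti.lt_iff_gt (strictAnti_measure_lt_apply (μ := P ![ε₁, ε₂]) 1)]
    simp only [← measure_le_apply_eq_measure_lt_apply hε _ (ta _), hta', ha']
  intro i
  fin_cases i
  · exact ⟨hb_lt_a 0, h_or_ta.elim id h_iff.2⟩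
  · exact ⟨hb_lt_a 1, h_or_ta.elim h_iff.1 id⟩

/-- Remark 2.2: the critical constants of the stepdown procedure (Theorem 2.1) and the stepup
procedure (Theorem 2.2) for `k = 2` satisfy `b i < a i < ã i` (here `ta` stands for `ã`). -/
theorem stmt_6
    (P : (Fin 2 → ℝ) → Measure (Fin 2 → ℝ)) (hP : Setup P)
    (α : ℝ) (hα : α ∈ Set.Ioo (0 : ℝ) 1)
    (ε₁ ε₂ : ℝ) (hε₁ : 0 < ε₁) (hε₂ : 0 < ε₂)
    (a b ta : Fin 2 → ℝ)
    (ha : P ![0, 0] {x | a 0 < x 0 ∨ a 1 < x 1} = ENNReal.ofReal α)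
    (ha' : P ![ε₁, ε₂] {x | a 0 < x 0} = P ![ε₁, ε₂] {x | a 1 < x 1})
    (hb : ∀ i : Fin 2, P ![0, 0] {x | b i ≤ x i} = ENNReal.ofReal α)
    (hta : P ![0, 0] ({x : Fin 2 → ℝ | ta 0 < x 0} ∪ {x | ta 1 < x 1} ∪
        {x | b 0 < x 0 ∧ b 1 < x 1}) = ENNReal.ofReal α)
    (hta' : P ![ε₁, ε₂] {x | ta 0 ≤ x 0} = P ![ε₁, ε₂] {x | ta 1 ≤ x 1}) :
    ∀ i : Fin 2, b i < a i ∧ a i < ta i :=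
  stmt_6_general P hP α ε₁ ε₂ a b ta ha ha' hb hta hta'
end
end

section
/- Let k ≥ 1 and α ∈ (0,1). Let d_1, …, d_k be the stepup critical constants, assumed nondecreasing: d_1 ≤ d_2 ≤ ⋯ ≤ d_k. Then the stepup rule D — which, with X_{(1)} ≤ ⋯ ≤ X_{(k)} the ordered coordinates, rejects the k − j* + 1 hypotheses corresponding to the k − j* + 1 largest coordinates where j* is the smallest j with X_{(j)} > d_j, and accepts all hypotheses if no such j exists — controls the FWER at level α: for every θ ∈ ℝ^k, P_θ{x : D rejects some H_i with θ_i ≤ 0} ≤ α. -/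
/-!
Let `I` be the set of true hypotheses and `G` the event that the ordered coordinates `x l`,
`l ∈ I`, stay below `d 1, d 2, …`. Because the `d i` are nondecreasing, rejecting some `H_i` with
`i ∈ I` forces the sample out of `G`. The complement of `G` is an upper set, so by (M) its
probability only grows when every `θ_i ≤ 0` is raised to `0`; by (C) the probability of `G` then
depends only on the law of `(X_i)_{i ∈ I}` at `θ = 0`, and by exchangeability it is
`P_0^{(|I|)}{X_{|I|:i} ≤ d_i, i ≤ |I|} = 1 - α`.
-/

open MeasureTheory Filter Set
open scoped ENNReal

noncomputable section

/-- Exchangeability of the law of `X` under any parameter with equal coordinates. -/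
def Exch {k : ℕ} (P : (Fin k → ℝ) → Measure (Fin k → ℝ)) : Prop :=
  ∀ (t : ℝ) (π : Equiv.Perm (Fin k)),
    Measure.map (fun x => x ∘ π) (P (fun _ => t)) = P (fun _ => t)

/-- The number of hypotheses rejected by the stepup procedure with critical constants `d`:
if `j*` is the smallest (1-based) `j` with `X_{(j)} > d j` (`X_{(1)} ≤ ⋯ ≤ X_{(k)}` the ordered
observations), then `k - j* + 1` hypotheses are rejected (none when no such `j` exists).
Below, positions are 0-based: `x (Tuple.sort x i')` is the `(i'+1)`-th smallest observation. -/
def suNumRej {k : ℕ} (d : ℕ → ℝ) (x : Fin k → ℝ) : ℕ :=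
  (Finset.univ.filter
    (fun i : Fin k => ∃ i' ≤ i, d ((i' : ℕ) + 1) < x (Tuple.sort x i'))).card

/-- The stepup rule with critical constants `d`: it rejects the hypotheses corresponding to the
`suNumRej d x` largest observations. -/
def suRule {k : ℕ} (d : ℕ → ℝ) (x : Fin k → ℝ) : Finset (Fin k) :=
  (Finset.univ.filter
    (fun i : Fin k => ∃ i' ≤ i, d ((i' : ℕ) + 1) < x (Tuple.sort x i'))).image (Tuple.sort x)

/-- `suDset k j d` is the event `D_{k,j} = ⋃_{i=1}^{k-j+1} {X_{(i)} > d i}` that the stepup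
procedure rejects at least `j` hypotheses (expressed by counting: the `(i+1)`-th smallest
observation exceeds `c` iff at most `i` observations are `≤ c`). -/
def suDset (k j : ℕ) (d : ℕ → ℝ) : Set (Fin k → ℝ) :=
  {x | ∃ i : Fin k, (i : ℕ) ≤ k - j ∧
    (Finset.univ.filter (fun l : Fin k => x l ≤ d ((i : ℕ) + 1))).card ≤ (i : ℕ)}

open scoped Finset

/-- `x ∈ orderStatsLE S d` iff the `i`-th smallest of the coordinates `x l`, `l ∈ S`, is at most
`d i` for `i = 1, …, #S`, i.e. iff the stepup procedure applied to the subfamily `S` rejects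
nothing. -/
def orderStatsLE {ι : Type*} (S : Finset ι) (d : ℕ → ℝ) : Set (ι → ℝ) :=
  {x | ∀ i, 1 ≤ i → i ≤ #S → i ≤ #{l ∈ S | x l ≤ d i}}

section OrderStatsLE

variable {ι : Type*} (d : ℕ → ℝ)

@[simp]
lemma orderStatsLE_empty : orderStatsLE (∅ : Finset ι) d = univ := by
  ext x
  simp [orderStatsLE]

lemma isLowerSet_orderStatsLE (S : Finset ι) : IsLowerSet (orderStatsLE S d) :=
  fun _ _ hyx hx i h1 h2 => (hx i h1 h2).trans <|
    Finset.card_le_card (Finset.monotone_filter_right S fun l _ hl => (hyx l).trans hl)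

lemma measurable_card_filter_le (S : Finset ι) (c : ℝ) :
    Measurable fun x : ι → ℝ => #{l ∈ S | x l ≤ c} := by
  simp_rw [Finset.card_filter]
  exact Finset.measurable_sum _ fun l _ =>
    Measurable.ite (measurableSet_le (measurable_pi_apply l) measurable_const)
      measurable_const measurable_const

lemma measurableSet_orderStatsLE (S : Finset ι) : MeasurableSet (orderStatsLE S d) := by
  simp only [orderStatsLE, Set.ofPred_forall]
  exact .iInter fun i => .iInter fun _ => .iInter fun _ =>
    measurable_card_filter_le S (d i) measurableSet_Ici

lemma orderStatsLE_eq_preimage_domRestrict (S : Finset ι) :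
    orderStatsLE S d = (↑S : Set ι).domRestrict ⁻¹' orderStatsLE Finset.univ d := by
  ext x
  have hcard : ∀ c, #{l | (↑S : Set ι).domRestrict x l ≤ c} = #{l ∈ S | x l ≤ c} := fun c => by
    rw [← Finset.card_map (Function.Embedding.subtype _)]
    congr 1
    ext l
    simp only [Finset.mem_map, Finset.mem_filter, Function.Embedding.coe_subtype]
    constructor
    · rintro ⟨⟨l, hl⟩, hc, rfl⟩
      exact ⟨hl, hc.2⟩
    · rintro ⟨hl, hc⟩
      exact ⟨⟨l, hl⟩, ⟨Finset.mem_univ _, hc⟩, rfl⟩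
  simp only [orderStatsLE, Set.mem_preimage, Set.mem_ofPred_eq, hcard]
  simp

lemma measure_orderStatsLE_congr {μ ν : Measure (ι → ℝ)} {S : Finset ι}
    (h : μ.map (↑S : Set ι).domRestrict = ν.map (↑S : Set ι).domRestrict) :
    μ (orderStatsLE S d) = ν (orderStatsLE S d) := by
  rw [orderStatsLE_eq_preimage_domRestrict,
    ← Measure.map_apply (Set.measurable_restrict _) (measurableSet_orderStatsLE _ _), h,
    Measure.map_apply (Set.measurable_restrict _) (measurableSet_orderStatsLE _ _)]

lemma preimage_comp_orderStatsLE (π : ι ≃ ι) (S : Finset ι) :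
    (fun x : ι → ℝ => x ∘ π) ⁻¹' orderStatsLE S d = orderStatsLE (S.map π.toEmbedding) d := by
  ext x
  simp [orderStatsLE, Finset.filter_map, Function.comp_def]

lemma exists_perm_map_eq [Fintype ι] [DecidableEq ι] {S T : Finset ι} (h : #S = #T) :
    ∃ π : Equiv.Perm ι, S.map π.toEmbedding = T := by
  let e : {l // l ∈ S} ≃ {l // l ∈ T} := Fintype.equivOfCardEq (by simpa using h)
  refine ⟨e.extendSubtype, Finset.eq_of_subset_of_card_le ?_ (by simp [h])⟩
  intro l hl
  obtain ⟨l, hlS, rfl⟩ := Finset.mem_map.1 hl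
  exact e.extendSubtype_mem l hlS

lemma measure_orderStatsLE_eq_of_card_eq [Fintype ι] [DecidableEq ι] {μ : Measure (ι → ℝ)}
    (hμ : ∀ π : Equiv.Perm ι, μ.map (fun x => x ∘ π) = μ) {S T : Finset ι} (h : #S = #T) :
    μ (orderStatsLE S d) = μ (orderStatsLE T d) := by
  obtain ⟨π, rfl⟩ := exists_perm_map_eq h
  have hπ : Measurable fun x : ι → ℝ => x ∘ π :=
    measurable_pi_lambda _ fun l => measurable_pi_apply _
  rw [← preimage_comp_orderStatsLE, ← Measure.map_apply hπ (measurableSet_orderStatsLE _ _), hμ]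

lemma orderStatsLE_filter_lt {k j : ℕ} (hj : j ≤ k) :
    orderStatsLE {l : Fin k | l < j} d =
      {x | ∀ i, 1 ≤ i → i ≤ j → i ≤ #{l : Fin k | l < j ∧ x l ≤ d i}} := by
  simp [orderStatsLE, Fin.card_filter_val_lt, hj, Finset.filter_filter]

end OrderStatsLE

section Stepup

variable {k : ℕ} {d : ℕ → ℝ} {x : Fin k → ℝ}

lemma card_filter_le_of_lt_sort {j : Fin k} {c : ℝ} (h : c < x (Tuple.sort x j)) :
    #{l | x l ≤ c} ≤ j := by
  have hperm : #{l | x l ≤ c} = #{l | (x ∘ Tuple.sort x) l ≤ c} :=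
    Finset.card_equiv (Tuple.sort x).symm (by simp)
  rw [hperm]
  exact not_lt.1 ((Tuple.lt_card_le_iff_apply_le_of_monotone (Tuple.monotone_sort x)).not.2
    h.not_ge)

lemma exists_lt_sort_of_mem_suRule {i : Fin k} (hi : i ∈ suRule d x) :
    ∃ j : Fin k, d (j + 1) < x (Tuple.sort x j) ∧ x (Tuple.sort x j) ≤ x i := by
  simp only [suRule, Finset.mem_image, Finset.mem_filter] at hi
  obtain ⟨p, ⟨-, j, hjp, hdj⟩, rfl⟩ := hi
  exact ⟨j, hdj, Tuple.monotone_sort x hjp⟩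

lemma notMem_orderStatsLE_of_mem_suRule (hd : MonotoneOn d (Set.Icc 1 k)) {S : Finset (Fin k)}
    {i : Fin k} (hi : i ∈ suRule d x) (hiS : i ∈ S) : x ∉ orderStatsLE S d := by
  obtain ⟨j, hdj, hji⟩ := exists_lt_sort_of_mem_suRule hi
  intro hx
  -- With `s` coordinates in `S` below `d (j + 1)`, the `(s + 1)`-th smallest one is above
  -- `d (j + 1) ≥ d (s + 1)`, contradicting `hx` at `s + 1`.
  set s := #{l ∈ S | x l ≤ d (j + 1)}
  have hsj : s ≤ j := (Finset.card_le_card (Finset.filter_subset_filter _ S.subset_univ)).trans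
    (card_filter_le_of_lt_sort hdj)
  have hsS : s < #S := Finset.card_lt_card <|
    Finset.filter_ssubset.2 ⟨i, hiS, (hdj.trans_le hji).not_ge⟩
  have hds : d (s + 1) ≤ d (j + 1) :=
    hd ⟨by omega, by omega⟩ ⟨by omega, by omega⟩ (by omega)
  have := (hx (s + 1) (by omega) hsS).trans <|
    Finset.card_le_card (Finset.monotone_filter_right S fun l _ hl => hl.trans hds)
  omega

end Stepup

lemma Setup.measure_mono_of_isUpperSet {k : ℕ} {P : (Fin k → ℝ) → Measure (Fin k → ℝ)}
    (hP : Setup P) {θ γ : Fin k → ℝ} (hθγ : θ ≤ γ) {M : Set (Fin k → ℝ)} (hM : MeasurableSet M)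
    (hMu : IsUpperSet M) : P θ M ≤ P γ M := by
  have := hP.2.2.1 (fun _ => 1) (fun _ => Or.inl rfl) θ γ (fun i => by simpa using hθγ i) M hM hMu
  simp only [one_mul] at this
  exact this

lemma ENNReal.one_sub_ofReal_one_sub_le (α : ℝ) :
    1 - ENNReal.ofReal (1 - α) ≤ ENNReal.ofReal α := by
  rw [tsub_le_iff_right]
  calc (1 : ℝ≥0∞) = ENNReal.ofReal (α + (1 - α)) := by simp
    _ ≤ _ := ENNReal.ofReal_add_le

theorem stmt_11_general
    (k : ℕ)
    (P : (Fin k → ℝ) → Measure (Fin k → ℝ)) (hP : Setup P) (hE : Exch P)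
    (α : ℝ)
    (d : ℕ → ℝ)
    (hd : ∀ j : ℕ, 1 ≤ j → j ≤ k →
      P (fun _ => (0 : ℝ)) {x | ∀ i : ℕ, 1 ≤ i → i ≤ j →
        i ≤ (Finset.univ.filter (fun l : Fin k => (l : ℕ) < j ∧ x l ≤ d i)).card} =
        ENNReal.ofReal (1 - α))
    (hdmono : ∀ i i' : ℕ, 1 ≤ i → i ≤ i' → i' ≤ k → d i ≤ d i') :
    ∀ θ : Fin k → ℝ, P θ {x | ∃ i ∈ suRule d x, θ i ≤ 0} ≤ ENNReal.ofReal α := by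
  intro θ
  have hprob := hP.1
  set I : Finset (Fin k) := {i | θ i ≤ 0}
  set G := orderStatsLE I d
  have hrej : {x | ∃ i ∈ suRule d x, θ i ≤ 0} ⊆ Gᶜ := fun x ⟨i, hi, hθi⟩ =>
    notMem_orderStatsLE_of_mem_suRule (fun a ha b hb hab => hdmono a b ha.1 hab hb.2) hi
      (by simpa [I] using hθi)
  rcases Nat.eq_zero_or_pos #I with hI | hI
  · rw [Finset.card_eq_zero] at hI
    simp only [G, hI, orderStatsLE_empty, compl_univ, subset_empty_iff] at hrej
    simp [hrej]
  let θ' : Fin k → ℝ := fun i => max (θ i) 0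
  have hup : P θ Gᶜ ≤ P θ' Gᶜ := hP.measure_mono_of_isUpperSet (fun i => le_max_left _ _)
    (measurableSet_orderStatsLE d I).compl (isLowerSet_orderStatsLE d I).compl
  have hnull : P θ' G = P (fun _ => 0) G := measure_orderStatsLE_congr d <|
    hP.2.2.2.1 I θ' _ fun i hi => max_eq_right (by simpa [I] using hi)
  have hIk : #I ≤ k := by simpa using I.card_le_univ
  have hexch : P (fun _ => 0) G = ENNReal.ofReal (1 - α) := by
    rw [measure_orderStatsLE_eq_of_card_eq d (hE 0) (T := {l : Fin k | l < #I})
      (by simp [Fin.card_filter_val_lt, hIk]), orderStatsLE_filter_lt d hIk]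
    exact hd _ hI hIk
  calc P θ {x | ∃ i ∈ suRule d x, θ i ≤ 0} ≤ P θ' Gᶜ := (measure_mono hrej).trans hup
    _ = 1 - ENNReal.ofReal (1 - α) := by
      rw [prob_compl_eq_one_sub (measurableSet_orderStatsLE d I), hnull, hexch]
    _ ≤ ENNReal.ofReal α := ENNReal.one_sub_ofReal_one_sub_le α

/-- Lemma 4.1(i): if the stepup critical constants `d 1 ≤ d 2 ≤ ⋯ ≤ d k` (determined by
`P₀^{(j)}{X_{j:i} ≤ d i, i = 1, …, j} = 1 - α`, stated below via counting) are nondecreasing,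
then the stepup rule controls the FWER at level `α`. -/
theorem stmt_11
    (k : ℕ) (hk : 1 ≤ k)
    (P : (Fin k → ℝ) → Measure (Fin k → ℝ)) (hP : Setup P) (hE : Exch P)
    (α : ℝ) (hα : α ∈ Set.Ioo (0 : ℝ) 1)
    (d : ℕ → ℝ)
    (hd : ∀ j : ℕ, 1 ≤ j → j ≤ k →
      P (fun _ => (0 : ℝ)) {x | ∀ i : ℕ, 1 ≤ i → i ≤ j →
        i ≤ (Finset.univ.filter (fun l : Fin k => (l : ℕ) < j ∧ x l ≤ d i)).card} =
        ENNReal.ofReal (1 - α))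
    (hdmono : ∀ i i' : ℕ, 1 ≤ i → i ≤ i' → i' ≤ k → d i ≤ d i') :
    ∀ θ : Fin k → ℝ, P θ {x | ∃ i ∈ suRule d x, θ i ≤ 0} ≤ ENNReal.ofReal α :=
  stmt_11_general k P hP hE α d hd hdmono
end
end

section
/- Let k ≥ 2 and adopt the setup below. Let R ⊆ ℝ^k be a Borel-measurable upper set, and fix θ_1, …, θ_{k−1} ∈ ℝ. Let Q_{θ_1,…,θ_{k−1}} denote the law of (X_1, …, X_{k−1}) under P_θ (which by (C) does not depend on θ_k). Then lim_{t → +∞} P_{(θ_1, …, θ_{k−1}, t)}(R) = Q_{θ_1,…,θ_{k−1}}(⋃_{z ∈ ℝ} R^z), where R^z = {(x_1, …, x_{k−1}) : (x_1, …, x_{k−1}, z) ∈ R}. -/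
open MeasureTheory Filter Set
open scoped ENNReal

noncomputable section

/-! Write `π x = (x₁, …, x_{k-1})`. Every point `x ∈ R` has `π x` in the slice `R^{x_k}`, so
`P_t(R) ≤ Q(⋃ R^z)` for all `t`. Conversely, since `R` is an upper set, a point with `π x ∈ R^z`
and `x_k > z` lies in `R`, so `Q(R^z) ≤ P_t(R) + P_t(X_k ≤ z)`, and the last term vanishes as
`t → ∞` by (L). The slices increase with `z`, so `Q(⋃ R^z) = sup_z Q(R^z)`. -/

open Topology

section LastSlice

variable {α : Type*} {n : ℕ} {R : Set (Fin (n + 1) → α)}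

def lastSlice (R : Set (Fin (n + 1) → α)) (z : α) : Set (Fin n → α) :=
  {y | Fin.snoc y z ∈ R}

lemma Fin.snoc_le_snoc [Preorder α] (y : Fin n → α) {z z' : α} (h : z ≤ z') :
    (Fin.snoc y z : Fin (n + 1) → α) ≤ Fin.snoc y z' :=
  fun i => Fin.lastCases (by simpa using h) (fun j => by simp) i

lemma IsUpperSet.monotone_lastSlice [Preorder α] (hR : IsUpperSet R) : Monotone (lastSlice R) :=
  fun _ _ h _ hy => hR (Fin.snoc_le_snoc _ h) hy

lemma subset_init_preimage_iUnion_lastSlice (R : Set (Fin (n + 1) → α)) :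
    R ⊆ Fin.init ⁻¹' ⋃ z, lastSlice R z := fun x hx =>
  mem_iUnion.2 ⟨x (Fin.last n), by simpa [lastSlice, Fin.snoc_init_self] using hx⟩

lemma IsUpperSet.init_preimage_lastSlice_subset [LinearOrder α] (hR : IsUpperSet R) (z : α) :
    Fin.init ⁻¹' lastSlice R z ⊆ R ∪ {x | x (Fin.last n) ≤ z} := by
  intro x hx
  rcases le_or_gt (x (Fin.last n)) z with hle | hlt
  · exact Or.inr hle
  · refine Or.inl (hR ?_ hx)
    simpa only [Fin.snoc_init_self] using Fin.snoc_le_snoc (Fin.init x) hlt.le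

lemma measurable_fin_snoc [MeasurableSpace α] (z : α) :
    Measurable (fun y : Fin n → α => (Fin.snoc y z : Fin (n + 1) → α)) :=
  measurable_pi_iff.2 fun i =>
    Fin.lastCases (by simp) (fun j => by simpa using measurable_pi_apply j) i

lemma measurable_fin_init [MeasurableSpace α] :
    Measurable (Fin.init : (Fin (n + 1) → α) → Fin n → α) :=
  measurable_pi_lambda _ fun _ => measurable_pi_apply _

lemma MeasurableSet.lastSlice [MeasurableSpace α] (hR : MeasurableSet R) (z : α) :
    MeasurableSet (lastSlice R z) :=
  measurable_fin_snoc z hR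

theorem tendsto_measure_of_isUpperSet [LinearOrder α] [MeasurableSpace α]
    [(atTop : Filter α).IsCountablyGenerated] {ι : Type*} {l : Filter ι}
    {μ : ι → Measure (Fin (n + 1) → α)} {Q : Measure (Fin n → α)} [IsFiniteMeasure Q]
    (hmarg : ∀ t, (μ t).map Fin.init = Q)
    (hlast : ∀ c, Tendsto (fun t => μ t {x | x (Fin.last n) ≤ c}) l (𝓝 0))
    (hRm : MeasurableSet R) (hR : IsUpperSet R) :
    Tendsto (fun t => μ t R) l (𝓝 (Q (⋃ z, lastSlice R z))) := by
  have hslice_le : ∀ t z, Q (lastSlice R z) ≤ μ t R + μ t {x | x (Fin.last n) ≤ z} := by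
    intro t z
    rw [← hmarg t, Measure.map_apply measurable_fin_init (hRm.lastSlice z)]
    exact (measure_mono (hR.init_preimage_lastSlice_subset z)).trans (measure_union_le _ _)
  have hle_union : ∀ t, μ t R ≤ Q (⋃ z, lastSlice R z) := fun t =>
    hmarg t ▸ (measure_mono (subset_init_preimage_iUnion_lastSlice R)).trans
      (Measure.le_map_apply measurable_fin_init.aemeasurable _)
  refine tendsto_order.2 ⟨fun b hb => ?_, fun b hb => .of_forall fun t => (hle_union t).trans_lt hb⟩
  obtain ⟨z, hz⟩ := lt_iSup_iff.1 (hR.monotone_lastSlice.measure_iUnion (μ := Q) ▸ hb)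
  have hlim : Tendsto (fun t => Q (lastSlice R z) - μ t {x | x (Fin.last n) ≤ z}) l
      (𝓝 (Q (lastSlice R z))) := by
    simpa using ENNReal.Tendsto.sub tendsto_const_nhds (hlast z) (.inl (measure_ne_top _ _))
  filter_upwards [hlim.eventually (lt_mem_nhds hz)] with t ht
  exact ht.trans_le (tsub_le_iff_right.2 (hslice_le t z))

end LastSlice

namespace Setup

variable {n : ℕ} {P : (Fin (n + 1) → ℝ) → Measure (Fin (n + 1) → ℝ)}

lemma map_init_snoc_eq (hP : Setup P) (θ : Fin n → ℝ) (s t : ℝ) :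
    (P (Fin.snoc θ s)).map Fin.init = (P (Fin.snoc θ t)).map Fin.init := by
  obtain ⟨-, -, -, hC, -⟩ := hP
  set I := range (Fin.castSucc : Fin n → Fin (n + 1))
  let g : (I → ℝ) → Fin n → ℝ := fun x i => x ⟨i.castSucc, mem_range_self i⟩
  have hg : Measurable g := measurable_pi_lambda _ fun _ => measurable_pi_apply _
  have hI : Measurable (I.restrict : (Fin (n + 1) → ℝ) → I → ℝ) :=
    measurable_pi_lambda _ fun _ => measurable_pi_apply _
  have hinit : (Fin.init : (Fin (n + 1) → ℝ) → Fin n → ℝ) = g ∘ I.restrict := rfl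
  rw [hinit, ← Measure.map_map hg hI, ← Measure.map_map hg hI, hC I _ _ ?_]
  rintro _ ⟨j, rfl⟩
  simp

lemma tendsto_measure_last_le (hP : Setup P) (θ : Fin n → ℝ) (c : ℝ) :
    Tendsto (fun t => P (Fin.snoc θ t) {x | x (Fin.last n) ≤ c}) atTop (𝓝 0) := by
  obtain ⟨-, -, -, -, hL⟩ := hP
  simpa only [Fin.update_snoc_last] using (hL (Fin.snoc θ 0) (Fin.last n) c).1

end Setup

theorem stmt_17_general (n : ℕ)
    (P : (Fin (n + 1) → ℝ) → Measure (Fin (n + 1) → ℝ)) (hP : Setup P)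
    (R : Set (Fin (n + 1) → ℝ)) (hRmeas : MeasurableSet R) (hR : IsUpperSet R)
    (θ : Fin n → ℝ)
    (Q : Measure (Fin n → ℝ))
    (hQ : Q = Measure.map (fun x : Fin (n + 1) → ℝ => fun i : Fin n => x i.castSucc)
      (P (Fin.snoc θ 0))) :
    Filter.Tendsto (fun t : ℝ => P (Fin.snoc θ t) R) Filter.atTop
      (nhds (Q (⋃ z : ℝ, {y : Fin n → ℝ | Fin.snoc y z ∈ R}))) := by
  have := hP.1 (Fin.snoc θ 0)
  subst hQ
  exact tendsto_measure_of_isUpperSet (fun t => hP.map_init_snoc_eq θ t 0)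
    (hP.tendsto_measure_last_le θ) hRmeas hR

/-- Lemma 6.2, equation (41): for a measurable upper set `R ⊆ ℝ^k` (`k = n + 1 ≥ 2`) and fixed
`θ₁, …, θ_{k-1}`, the probability of `R` tends, as the last parameter tends to `+∞`, to the
probability under the law `Q` of the first `k - 1` coordinates of the union of the slices
`R^z = {y | (y, z) ∈ R}`. -/
theorem stmt_17 (n : ℕ) (hn : 1 ≤ n)
    (P : (Fin (n + 1) → ℝ) → Measure (Fin (n + 1) → ℝ)) (hP : Setup P)
    (R : Set (Fin (n + 1) → ℝ)) (hRmeas : MeasurableSet R) (hR : IsUpperSet R)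
    (θ : Fin n → ℝ)
    (Q : Measure (Fin n → ℝ))
    (hQ : Q = Measure.map (fun x : Fin (n + 1) → ℝ => fun i : Fin n => x i.castSucc)
      (P (Fin.snoc θ 0))) :
    Filter.Tendsto (fun t : ℝ => P (Fin.snoc θ t) R) Filter.atTop
      (nhds (Q (⋃ z : ℝ, {y : Fin n → ℝ | Fin.snoc y z ∈ R}))) :=
  stmt_17_general n P hP R hRmeas hR θ Q hQ
end
end
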